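/- arXiv:0802.0291 — 4 statements merged into one kernel-verified Lean document; each statement's English description precedes it below -/
import Mathlib

section
/- The set of separable hermitian 2-forms on H = K ⊗ L is closed in the real vector space of all hermitian 2-forms on H. -/
open scoped TensorProduct ComplexConjugate
open Finset

variable {K L : Type*} [AddCommGroup K] [Module ℂ K] [FiniteDimensional ℂ K]
  [AddCommGroup L] [Module ℂ L] [FiniteDimensional ℂ L]

/-- The linear functional `φ ⊗ ψ` on `K ⊗[ℂ] L`. -/
noncomputable def prodFun (φ : K →ₗ[ℂ] ℂ) (ψ : L →ₗ[ℂ] ℂ) : (K ⊗[ℂ] L) →ₗ[ℂ] ℂ :=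
  (TensorProduct.lid ℂ ℂ).toLinearMap ∘ₗ TensorProduct.map φ ψ

/-- Hermitian tensor product of two linear functionals. -/
noncomputable def hermOdot (α β : (K ⊗[ℂ] L) →ₗ[ℂ] ℂ) :
    (K ⊗[ℂ] L) → (K ⊗[ℂ] L) → ℂ :=
  fun z w => (conj (α z) * β w + conj (β z) * α w) / 2

/-- A hermitian 2-form on `K ⊗ L` is separable if it is a finite sum of product forms. -/
def IsSepForm (ρ : (K ⊗[ℂ] L) → (K ⊗[ℂ] L) → ℂ) : Prop :=
  ∃ (P : ℕ) (φ : Fin P → (K →ₗ[ℂ] ℂ)) (ψ : Fin P → (L →ₗ[ℂ] ℂ)),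
    ρ = fun z w => ∑ p, hermOdot (prodFun (φ p) (ψ p)) (prodFun (φ p) (ψ p)) z w

/-!
Fix bases of `K` and `L` and write a product form in terms of the coordinate vectors `c`, `e` of
its two factors. Rescaling `c` and `e` to unit vectors multiplies the form by `‖c‖² ‖e‖² ≥ 0`, so
the separable forms are exactly the convex cone generated by the compact set of product forms with
unit coordinate vectors. That set spans a finite-dimensional space and lies on the hyperplane
where the diagonal trace `∑ᵤ ρ(bᵤ, bᵤ)` equals `1`. By Carathéodory's theorem for cones, every
point of the cone is a conic combination of `d` generators, `d` the dimension of their span, and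
its coefficients are bounded by its trace. Hence the part of the cone where the trace is below
`R` is contained in a compact subset of the cone, and the cone is closed.
-/

section ConicCombs

open Module Submodule

variable (𝕜 : Type*) {E : Type*} [Semiring 𝕜] [PartialOrder 𝕜] [AddCommMonoid E] [Module 𝕜 E]

def conicCombs (C : Set E) (n : ℕ) : Set E :=
  {x | ∃ (r : Fin n → 𝕜) (c : Fin n → E), (∀ i, 0 ≤ r i) ∧ (∀ i, c i ∈ C) ∧ ∑ i, r i • c i = x}

variable {𝕜} {C : Set E}

lemma conicCombs_subset_hull [IsOrderedRing 𝕜] (n : ℕ) :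
    conicCombs 𝕜 C n ⊆ PointedCone.hull 𝕜 C := by
  rintro _ ⟨r, c, hr, hc, rfl⟩
  exact sum_mem fun i _ => smul_mem _ (⟨r i, hr i⟩ : {a : 𝕜 // 0 ≤ a}) (subset_span (hc i))

lemma conicCombs_mono (hC : C.Nonempty) {n m : ℕ} (hnm : n ≤ m) :
    conicCombs 𝕜 C n ⊆ conicCombs 𝕜 C m := by
  rintro _ ⟨r, c, hr, hc, rfl⟩
  obtain ⟨c₀, hc₀⟩ := hC
  refine ⟨fun j => if h : (j : ℕ) < n then r ⟨j, h⟩ else 0,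
    fun j => if h : (j : ℕ) < n then c ⟨j, h⟩ else c₀, fun j => ?_, fun j => ?_, ?_⟩
  · dsimp only; split_ifs; exacts [hr _, le_rfl]
  · dsimp only; split_ifs; exacts [hc _, hc₀]
  · refine (Fintype.sum_of_injective (Fin.castLE hnm) (Fin.castLE_injective hnm) _ _
      (fun j hj => ?_) (fun i => by simp)).symm
    dsimp only
    rw [dif_neg fun h => hj ⟨⟨j, h⟩, rfl⟩, zero_smul]

end ConicCombs

section Caratheodory

open Module Submodule

variable {𝕜 E : Type*} [Field 𝕜] [LinearOrder 𝕜] [IsStrictOrderedRing 𝕜] [AddCommGroup E]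
  [Module 𝕜 E] {C : Set E}

/-- A conic combination of more than `dim (span C)` vectors can drop one of them: a linear
dependence `∑ gᵢ rᵢ cᵢ = 0` with `g` maximal at `p₀` rescales `rᵢ` to `(1 - gᵢ / g_{p₀}) rᵢ`. -/
lemma conicCombs_succ_subset [FiniteDimensional 𝕜 (span 𝕜 C)] {n : ℕ}
    (hn : finrank 𝕜 (span 𝕜 C) < n + 1) : conicCombs 𝕜 C (n + 1) ⊆ conicCombs 𝕜 C n := by
  rintro _ ⟨r, c, hr, hc, rfl⟩
  have hdep : ¬ LinearIndependent 𝕜 fun i => r i • c i := fun hli => by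
    have := Submodule.finrank_mono (span_le.mpr (Set.range_subset_iff.mpr
      fun i => smul_mem _ (r i) (subset_span (hc i))))
    rw [finrank_span_eq_card hli, Fintype.card_fin] at this
    omega
  obtain ⟨g, hg, i₁, hi₁⟩ : ∃ g : Fin (n + 1) → 𝕜, ∑ i, g i • r i • c i = 0 ∧ ∃ i, 0 < g i := by
    obtain ⟨g, hg, i₁, hi₁⟩ := Fintype.not_linearIndependent_iff.mp hdep
    rcases hi₁.lt_or_gt with h | h
    · exact ⟨-g, by simp [neg_smul, hg], i₁, by simpa using h⟩
    · exact ⟨g, hg, i₁, h⟩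
  obtain ⟨p₀, hp₀⟩ := Finite.exists_max g
  have hgp₀ : 0 < g p₀ := hi₁.trans_le (hp₀ i₁)
  set r' : Fin (n + 1) → 𝕜 := fun i => (1 - g i / g p₀) * r i
  have hr' : ∀ i, 0 ≤ r' i := fun i =>
    mul_nonneg (sub_nonneg.mpr ((div_le_one hgp₀).mpr (hp₀ i))) (hr i)
  have hsum : ∑ i, r' i • c i = ∑ i, r i • c i := by
    simp only [r', sub_mul, one_mul, sub_smul, Finset.sum_sub_distrib, sub_eq_self, mul_smul,
      div_eq_inv_mul, ← Finset.smul_sum, hg, smul_zero]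
  refine ⟨fun i => r' (p₀.succAbove i), fun i => c (p₀.succAbove i), fun i => hr' _,
    fun i => hc _, ?_⟩
  rw [← hsum, Fin.sum_univ_succAbove _ p₀]
  simp [r', hgp₀.ne']

lemma conicCombs_subset_conicCombs_finrank [FiniteDimensional 𝕜 (span 𝕜 C)] (hC : C.Nonempty)
    (n : ℕ) : conicCombs 𝕜 C n ⊆ conicCombs 𝕜 C (finrank 𝕜 (span 𝕜 C)) := by
  induction n with
  | zero => exact conicCombs_mono hC (Nat.zero_le _)
  | succ n ih =>
    rcases le_or_gt (n + 1) (finrank 𝕜 (span 𝕜 C)) with h | h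
    · exact conicCombs_mono hC h
    · exact (conicCombs_succ_subset h).trans ih

theorem PointedCone.hull_subset_conicCombs_finrank [FiniteDimensional 𝕜 (span 𝕜 C)]
    (hC : C.Nonempty) : (PointedCone.hull 𝕜 C : Set E) ⊆ conicCombs 𝕜 C (finrank 𝕜 (span 𝕜 C)) := by
  intro x hx
  obtain ⟨n, r, c, rfl⟩ := Submodule.mem_span_set'.mp hx
  exact conicCombs_subset_conicCombs_finrank hC n
    ⟨fun i => r i, fun i => c i, fun i => (r i).2, fun i => (c i).2, rfl⟩

end Caratheodory

open Module Submodule in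
theorem PointedCone.isClosed_hull_of_isCompact {E : Type*} [AddCommGroup E] [Module ℝ E]
    [TopologicalSpace E] [T2Space E] [ContinuousAdd E] [ContinuousSMul ℝ E] {C : Set E}
    (hC : IsCompact C) [FiniteDimensional ℝ (span ℝ C)] (f : E →L[ℝ] ℝ)
    (hf : ∀ x ∈ C, f x = 1) : IsClosed (PointedCone.hull ℝ C : Set E) := by
  rcases C.eq_empty_or_nonempty with rfl | hne
  · simp
  set m := finrank ℝ (span ℝ C)
  let S : ℝ → Set E := fun R => (fun p : (Fin m → ℝ) × (Fin m → E) => ∑ i, p.1 i • p.2 i) ''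
    (Set.univ.pi (fun _ => Set.Icc 0 R) ×ˢ Set.univ.pi fun _ => C)
  have hS_compact : ∀ R, IsCompact (S R) := fun R =>
    ((isCompact_univ_pi fun _ => isCompact_Icc).prod (isCompact_univ_pi fun _ => hC)).image
      (by fun_prop)
  have hS_hull : ∀ R, S R ⊆ PointedCone.hull ℝ C := by
    rintro R _ ⟨⟨r, c⟩, ⟨hr, hc⟩, rfl⟩
    exact conicCombs_subset_hull m ⟨r, c, fun i => (hr i trivial).1, fun i => hc i trivial, rfl⟩
  have hhull_S : ∀ R, (PointedCone.hull ℝ C : Set E) ∩ {x | f x < R} ⊆ S R := by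
    rintro R x ⟨hx, hxR⟩
    obtain ⟨r, c, hr, hc, rfl⟩ := PointedCone.hull_subset_conicCombs_finrank hne hx
    have hfx : f (∑ i, r i • c i) = ∑ i, r i := by simp [hf _ (hc _)]
    refine ⟨(r, c), ⟨fun i _ => ⟨hr i, ?_⟩, fun i _ => hc i⟩, rfl⟩
    calc r i ≤ ∑ j, r j := Finset.single_le_sum (fun j _ => hr j) (Finset.mem_univ i)
      _ ≤ R := by rw [← hfx]; exact le_of_lt hxR
  refine isClosed_of_closure_subset fun x hx => hS_hull (f x + 1) ?_
  have hx' : x ∈ closure ((PointedCone.hull ℝ C : Set E) ∩ {y | f y < f x + 1}) := by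
    rw [Set.inter_comm]
    exact (isOpen_lt f.continuous continuous_const).inter_closure ⟨lt_add_one (f x), hx⟩
  exact (hS_compact _).isClosed.closure_subset_iff.mpr (hhull_S _) hx'

section ProductForms

open Module

omit [FiniteDimensional ℂ K] [FiniteDimensional ℂ L]

lemma hermOdot_self_apply (α : (K ⊗[ℂ] L) →ₗ[ℂ] ℂ) (z w : K ⊗[ℂ] L) :
    hermOdot α α z w = conj (α z) * α w := by
  simp [hermOdot]

lemma prodFun_tmul (φ : K →ₗ[ℂ] ℂ) (ψ : L →ₗ[ℂ] ℂ) (x : K) (y : L) :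
    prodFun φ ψ (x ⊗ₜ y) = φ x * ψ y := by
  simp [prodFun]

variable {ι κ : Type*} [Fintype ι] [Fintype κ] (bK : Basis ι ℂ K) (bL : Basis κ ℂ L)

lemma prodFun_apply_eq_sum (φ : K →ₗ[ℂ] ℂ) (ψ : L →ₗ[ℂ] ℂ) (z : K ⊗[ℂ] L) :
    prodFun φ ψ z =
      ∑ u, (bK.tensorProduct bL).repr z u * (φ (bK u.1) * ψ (bL u.2)) := by
  conv_lhs => rw [← (bK.tensorProduct bL).sum_repr z]
  simp only [map_sum, map_smul, Basis.tensorProduct_apply', prodFun_tmul, smul_eq_mul]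

noncomputable def prodForm (φ : K →ₗ[ℂ] ℂ) (ψ : L →ₗ[ℂ] ℂ) : (K ⊗[ℂ] L) → (K ⊗[ℂ] L) → ℂ :=
  hermOdot (prodFun φ ψ) (prodFun φ ψ)

lemma isSepForm_iff (ρ : (K ⊗[ℂ] L) → (K ⊗[ℂ] L) → ℂ) :
    IsSepForm ρ ↔ ∃ (P : ℕ) (φ : Fin P → (K →ₗ[ℂ] ℂ)) (ψ : Fin P → (L →ₗ[ℂ] ℂ)),
      ρ = ∑ p, prodForm (φ p) (ψ p) := by
  simp only [IsSepForm, prodForm, ← Finset.sum_apply]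

noncomputable def coordForm (p : EuclideanSpace ℂ ι × EuclideanSpace ℂ κ) :
    (K ⊗[ℂ] L) → (K ⊗[ℂ] L) → ℂ :=
  prodForm (bK.constr ℂ p.1) (bL.constr ℂ p.2)

lemma coordForm_apply (p : EuclideanSpace ℂ ι × EuclideanSpace ℂ κ) (z w : K ⊗[ℂ] L) :
    coordForm bK bL p z w =
      conj (∑ u, (bK.tensorProduct bL).repr z u * (p.1 u.1 * p.2 u.2)) *
        ∑ u, (bK.tensorProduct bL).repr w u * (p.1 u.1 * p.2 u.2) := by
  simp only [coordForm, prodForm, hermOdot_self_apply, prodFun_apply_eq_sum bK bL,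
    Basis.constr_basis]

lemma continuous_coordForm : Continuous (coordForm bK bL) := by
  refine continuous_pi fun z => continuous_pi fun w => ?_
  simp only [coordForm_apply]
  fun_prop

lemma coordForm_smul (a b : ℝ) (p : EuclideanSpace ℂ ι × EuclideanSpace ℂ κ) :
    coordForm bK bL (a • p.1, b • p.2) = (a ^ 2 * b ^ 2) • coordForm bK bL p := by
  have hsum : ∀ y : K ⊗[ℂ] L,
      ∑ u, (bK.tensorProduct bL).repr y u * ((a • p.1) u.1 * (b • p.2) u.2) =
        (a * b : ℂ) * ∑ u, (bK.tensorProduct bL).repr y u * (p.1 u.1 * p.2 u.2) := fun y => by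
    simp only [Finset.mul_sum, PiLp.smul_apply, Complex.real_smul]
    exact Finset.sum_congr rfl fun u _ => by ring
  ext z w
  simp only [coordForm_apply, hsum, Pi.smul_apply, Complex.real_smul, map_mul, Complex.conj_ofReal]
  push_cast
  ring

noncomputable def unitProdForms : Set ((K ⊗[ℂ] L) → (K ⊗[ℂ] L) → ℂ) :=
  coordForm bK bL '' (Metric.sphere 0 1 ×ˢ Metric.sphere 0 1)

lemma isCompact_unitProdForms : IsCompact (unitProdForms bK bL) :=
  ((isCompact_sphere 0 1).prod (isCompact_sphere 0 1)).image (continuous_coordForm bK bL)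

noncomputable def diagTrace : ((K ⊗[ℂ] L) → (K ⊗[ℂ] L) → ℂ) →L[ℝ] ℝ :=
  ∑ u, Complex.reCLM ∘L ContinuousLinearMap.proj ((bK.tensorProduct bL) u) ∘L
    ContinuousLinearMap.proj ((bK.tensorProduct bL) u)

lemma diagTrace_coordForm (p : EuclideanSpace ℂ ι × EuclideanSpace ℂ κ) :
    diagTrace bK bL (coordForm bK bL p) = ‖p.1‖ ^ 2 * ‖p.2‖ ^ 2 := by
  have hdiag : ∀ u, (coordForm bK bL p ((bK.tensorProduct bL) u) ((bK.tensorProduct bL) u)).re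
      = ‖p.1 u.1‖ ^ 2 * ‖p.2 u.2‖ ^ 2 := fun u => by
    rw [coordForm, prodForm, hermOdot_self_apply, Basis.tensorProduct_apply', prodFun_tmul,
      Basis.constr_basis, Basis.constr_basis, ← Complex.normSq_eq_conj_mul_self,
      Complex.ofReal_re, Complex.normSq_mul, Complex.normSq_eq_norm_sq, Complex.normSq_eq_norm_sq]
  simp only [diagTrace, _root_.sum_apply, ContinuousLinearMap.comp_apply,
    ContinuousLinearMap.proj_apply, Complex.reCLM_apply, hdiag, EuclideanSpace.norm_sq_eq,
    Finset.sum_mul_sum, Fintype.sum_prod_type]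

lemma diagTrace_eq_one_of_mem_unitProdForms {σ} (hσ : σ ∈ unitProdForms bK bL) :
    diagTrace bK bL σ = 1 := by
  obtain ⟨p, ⟨h₁, h₂⟩, rfl⟩ := hσ
  rw [diagTrace_coordForm, mem_sphere_zero_iff_norm.mp h₁, mem_sphere_zero_iff_norm.mp h₂]
  norm_num

lemma coordForm_zero_left (e : EuclideanSpace ℂ κ) : coordForm bK bL (0, e) = 0 := by
  ext z w
  simp [coordForm_apply]

lemma coordForm_zero_right (c : EuclideanSpace ℂ ι) : coordForm bK bL (c, 0) = 0 := by
  ext z w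
  simp [coordForm_apply]

lemma prodForm_mem_hull_unitProdForms (φ : K →ₗ[ℂ] ℂ) (ψ : L →ₗ[ℂ] ℂ) :
    prodForm φ ψ ∈ PointedCone.hull ℝ (unitProdForms bK bL) := by
  set c : EuclideanSpace ℂ ι := WithLp.toLp 2 fun i => φ (bK i)
  set e : EuclideanSpace ℂ κ := WithLp.toLp 2 fun j => ψ (bL j)
  have hφψ : prodForm φ ψ = coordForm bK bL (c, e) := by
    simp only [coordForm, c, e, Basis.constr_self]
  rw [hφψ]
  rcases eq_or_ne c 0 with hc | hc
  · rw [hc, coordForm_zero_left]; exact zero_mem _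
  rcases eq_or_ne e 0 with he | he
  · rw [he, coordForm_zero_right]; exact zero_mem _
  have hnorm : coordForm bK bL (c, e) =
      (‖c‖ ^ 2 * ‖e‖ ^ 2) • coordForm bK bL (‖c‖⁻¹ • c, ‖e‖⁻¹ • e) := by
    rw [← coordForm_smul, smul_inv_smul₀ (norm_ne_zero_iff.mpr hc),
      smul_inv_smul₀ (norm_ne_zero_iff.mpr he)]
  rw [hnorm]
  refine Submodule.smul_mem _ (⟨‖c‖ ^ 2 * ‖e‖ ^ 2, by positivity⟩ : {a : ℝ // 0 ≤ a})
    (PointedCone.subset_hull (Set.mem_image_of_mem (coordForm bK bL)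
      (Set.mk_mem_prod ?_ ?_)))
  · exact mem_sphere_zero_iff_norm.mpr (norm_smul_inv_norm hc)
  · exact mem_sphere_zero_iff_norm.mpr (norm_smul_inv_norm he)

lemma isSepForm_of_mem_hull_unitProdForms {ρ : (K ⊗[ℂ] L) → (K ⊗[ℂ] L) → ℂ}
    (hρ : ρ ∈ PointedCone.hull ℝ (unitProdForms bK bL)) : IsSepForm ρ := by
  obtain ⟨n, r, g, rfl⟩ := Submodule.mem_span_set'.mp hρ
  choose p hp using fun i => (g i).2
  have hterm : ∀ i, r i • (g i : (K ⊗[ℂ] L) → (K ⊗[ℂ] L) → ℂ) =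
      coordForm bK bL (√(r i : ℝ) • (p i).1, (p i).2) := fun i => by
    simpa [(hp i).2, Real.sq_sqrt (r i).2] using (coordForm_smul bK bL √(r i : ℝ) 1 (p i)).symm
  exact (isSepForm_iff _).mpr ⟨n, fun i => bK.constr ℂ (√(r i : ℝ) • (p i).1),
    fun i => bL.constr ℂ (p i).2, by simp only [hterm]; rfl⟩

noncomputable def basisForm (uv : (ι × κ) × (ι × κ)) : (K ⊗[ℂ] L) → (K ⊗[ℂ] L) → ℂ :=
  fun z w => conj ((bK.tensorProduct bL).repr z uv.1) * (bK.tensorProduct bL).repr w uv.2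

lemma coordForm_mem_span_basisForm (p : EuclideanSpace ℂ ι × EuclideanSpace ℂ κ) :
    coordForm bK bL p ∈ Submodule.span ℂ (Set.range (basisForm bK bL)) := by
  set x : ι × κ → ℂ := fun u => p.1 u.1 * p.2 u.2
  have hexp : coordForm bK bL p = ∑ u, ∑ v, (conj (x u) * x v) • basisForm bK bL (u, v) := by
    ext z w
    simp only [coordForm_apply, basisForm, Finset.sum_apply, Pi.smul_apply, smul_eq_mul, map_sum,
      map_mul, Finset.sum_mul_sum, x]
    exact Finset.sum_congr rfl fun u _ => Finset.sum_congr rfl fun v _ => by ring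
  rw [hexp]
  exact Submodule.sum_mem _ fun u _ => Submodule.sum_mem _ fun v _ =>
    Submodule.smul_mem _ _ (Submodule.subset_span (Set.mem_range_self (u, v)))

lemma finiteDimensional_span_unitProdForms :
    FiniteDimensional ℝ (Submodule.span ℝ (unitProdForms bK bL)) := by
  have : FiniteDimensional ℂ (Submodule.span ℂ (Set.range (basisForm bK bL))) :=
    FiniteDimensional.span_of_finite ℂ (Set.finite_range _)
  have : FiniteDimensional ℝ ((Submodule.span ℂ (Set.range (basisForm bK bL))).restrictScalars ℝ) :=
    Module.Finite.trans (R := ℝ) ℂ (Submodule.span ℂ (Set.range (basisForm bK bL)))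
  refine Submodule.finiteDimensional_of_le
    (S₂ := (Submodule.span ℂ (Set.range (basisForm bK bL))).restrictScalars ℝ)
    (Submodule.span_le.mpr ?_)
  rintro _ ⟨p, -, rfl⟩
  exact coordForm_mem_span_basisForm bK bL p

lemma isSepForm_iff_mem_hull_unitProdForms (ρ : (K ⊗[ℂ] L) → (K ⊗[ℂ] L) → ℂ) :
    IsSepForm ρ ↔ ρ ∈ PointedCone.hull ℝ (unitProdForms bK bL) := by
  refine ⟨fun hρ => ?_, isSepForm_of_mem_hull_unitProdForms bK bL⟩
  obtain ⟨P, φ, ψ, rfl⟩ := (isSepForm_iff ρ).mp hρ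
  exact sum_mem fun p _ => prodForm_mem_hull_unitProdForms bK bL (φ p) (ψ p)

end ProductForms

/-- the set of separable hermitian 2-forms is closed (in the
topology of pointwise convergence, which on the finite-dimensional space of
hermitian forms is the standard topology). -/
theorem sepForms_isClosed :
    IsClosed {ρ : (K ⊗[ℂ] L) → (K ⊗[ℂ] L) → ℂ | IsSepForm ρ} := by
  let bK := Module.finBasis ℂ K
  let bL := Module.finBasis ℂ L
  have := finiteDimensional_span_unitProdForms bK bL
  convert PointedCone.isClosed_hull_of_isCompact (isCompact_unitProdForms bK bL) (diagTrace bK bL)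
    fun _ => diagTrace_eq_one_of_mem_unitProdForms bK bL using 1
  exact Set.ext (isSepForm_iff_mem_hull_unitProdForms bK bL)
end

section
/- If a real linear functional θ on the space of hermitian 2-forms on ℂⁿ ⊗ ℂᵐ vanishes on every product form conj((ε_a + e_K ε_b) ⊗ (γ_c + e_L γ_d)) ⊙ ((ε_a + e_K ε_b) ⊗ (γ_c + e_L γ_d)) where ε_i, γ_j are fixed bases of (ℂⁿ)*, (ℂᵐ)*, a,b ∈ {1,…,n}, c,d ∈ {1,…,m}, and e_K, e_L ∈ {1, i}, then θ = 0. -/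
open scoped ComplexConjugate
open Complex

/-! The coefficients θ define a sesquilinear form `B` on `ℂⁿ ⊗ ℂᵐ`. If a sesquilinear form `C`
satisfies `C x x = C y y = 0`, then `C (x + y) (x + y) = C x y + C y x` and
`C (x + i y) (x + i y) = i (C x y - C y x)`, so `C x y = 0`; hence `C` vanishes on pairs of basis
vectors once it vanishes on every `e_a + e e_b` with `e ∈ {1, i}` (taking `a = b` gives the
diagonal). This is applied first to `(u, u') ↦ B (u ⊗ w) (u' ⊗ w)` for each `w = γ_c + e_L γ_d`,
and then to `(w, w') ↦ B (ε_a ⊗ w) (ε_b ⊗ w')`. -/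

section Polarization

variable {M : Type*} [AddCommGroup M] [Module ℂ M]

theorem LinearMap.sesq_apply_eq_zero_of_apply_self (C : M →ₗ⋆[ℂ] M →ₗ[ℂ] ℂ) {x y : M}
    (hx : C x x = 0) (hy : C y y = 0) (h₁ : C (x + y) (x + y) = 0)
    (hI : C (x + I • y) (x + I • y) = 0) : C x y = 0 := by
  simp only [map_add, map_smul, LinearMap.add_apply, LinearMap.smul_apply, smul_eq_mul,
    LinearMap.map_smulₛₗ, conj_I, hx, hy] at h₁ hI
  linear_combination (h₁ - I * hI) / 2 + (C x y - C y x) / 2 * I_sq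

variable {ι : Type*} [DecidableEq ι]

theorem LinearMap.sesq_apply_single_eq_zero (C : (ι → ℂ) →ₗ⋆[ℂ] (ι → ℂ) →ₗ[ℂ] ℂ)
    (h : ∀ a b : ι, ∀ e : ℂ, (e = 1 ∨ e = I) →
      C (Pi.single a 1 + e • Pi.single b 1) (Pi.single a 1 + e • Pi.single b 1) = 0)
    (a b : ι) : C (Pi.single a 1) (Pi.single b 1) = 0 := by
  have hdiag (a : ι) : C (Pi.single a 1) (Pi.single a 1) = 0 := by
    have := h a a 1 (Or.inl rfl)
    rw [one_smul, ← two_smul ℂ (Pi.single a 1 : ι → ℂ)] at this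
    simpa using this
  exact C.sesq_apply_eq_zero_of_apply_self (hdiag a) (hdiag b)
    (by simpa using h a b 1 (Or.inl rfl)) (h a b I (Or.inr rfl))

end Polarization

section KroneckerVec

variable (R : Type*) {ι κ : Type*} [CommSemiring R]

def kroneckerVec : (ι → R) →ₗ[R] (κ → R) →ₗ[R] (ι × κ → R) :=
  LinearMap.mk₂ R (fun u w p => u p.1 * w p.2)
    (fun _ _ _ => by ext; simp [add_mul]) (fun _ _ _ => by ext; simp [mul_assoc])
    (fun _ _ _ => by ext; simp [mul_add]) (fun _ _ _ => by ext; simp [mul_left_comm])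

variable {R}

@[simp]
theorem kroneckerVec_apply (u : ι → R) (w : κ → R) (p : ι × κ) :
    kroneckerVec R u w p = u p.1 * w p.2 := rfl

theorem kroneckerVec_single [DecidableEq ι] [DecidableEq κ] (a : ι) (c : κ) :
    kroneckerVec R (Pi.single a 1) (Pi.single c 1) = Pi.single (a, c) 1 := by
  ext ⟨i, j⟩
  by_cases i = a <;> by_cases j = c <;> simp_all

theorem Matrix.toLinearMapₛₗ₂'_kroneckerVec [Fintype ι] [Fintype κ] [DecidableEq ι]
    [DecidableEq κ] (θ : ι × κ → ι × κ → ℂ) (u u' : ι → ℂ) (w w' : κ → ℂ) :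
    (Matrix.of θ).toLinearMapₛₗ₂' ℂ (starRingEnd ℂ) (RingHom.id ℂ) (kroneckerVec ℂ u w)
        (kroneckerVec ℂ u' w') =
      ∑ i, ∑ j, ∑ k, ∑ l, θ (i, j) (k, l) * conj (u i * w j) * (u' k * w' l) := by
  simp only [Matrix.toLinearMapₛₗ₂'_apply, Fintype.sum_prod_type, kroneckerVec_apply,
    smul_eq_mul, RingHom.id_apply, Matrix.of_apply]
  refine Finset.sum_congr rfl fun _ _ => Finset.sum_congr rfl fun _ _ =>
    Finset.sum_congr rfl fun _ _ => Finset.sum_congr rfl fun _ _ => ?_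
  ring

end KroneckerVec

theorem theta_vanishes_general (n m : ℕ)
    (θ : (Fin n × Fin m) → (Fin n × Fin m) → ℂ)
    (hvanish : ∀ (a b : Fin n) (c d : Fin m) (eK eL : ℂ),
      (eK = 1 ∨ eK = I) → (eL = 1 ∨ eL = I) →
      (∑ i, ∑ j, ∑ k, ∑ l, θ (i, j) (k, l) *
        conj (((if i = a then 1 else 0) + eK * (if i = b then 1 else 0)) *
              ((if j = c then 1 else 0) + eL * (if j = d then 1 else 0))) *
        (((if k = a then 1 else 0) + eK * (if k = b then 1 else 0)) *
         ((if l = c then 1 else 0) + eL * (if l = d then 1 else 0)))) = 0) :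
    θ = 0 := by
  let B := Matrix.toLinearMapₛₗ₂' ℂ (starRingEnd ℂ) (RingHom.id ℂ) (Matrix.of θ)
  let v {ι : Type} [DecidableEq ι] (a b : ι) (e : ℂ) : ι → ℂ := Pi.single a 1 + e • Pi.single b 1
  have hproduct (a b : Fin n) (c d : Fin m) (eK eL : ℂ) (hK : eK = 1 ∨ eK = I)
      (hL : eL = 1 ∨ eL = I) :
      B (kroneckerVec ℂ (v a b eK) (v c d eL)) (kroneckerVec ℂ (v a b eK) (v c d eL)) = 0 := by
    simpa only [B, v, Matrix.toLinearMapₛₗ₂'_kroneckerVec, Pi.add_apply, Pi.smul_apply,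
      Pi.single_apply, smul_eq_mul] using hvanish a b c d eK eL hK hL
  have hfirst (a b : Fin n) (c d : Fin m) (eL : ℂ) (hL : eL = 1 ∨ eL = I) :
      B (kroneckerVec ℂ (Pi.single a 1) (v c d eL))
        (kroneckerVec ℂ (Pi.single b 1) (v c d eL)) = 0 :=
    ((B.comp ((kroneckerVec ℂ).flip (v c d eL))).compl₂ ((kroneckerVec ℂ).flip (v c d eL)))
      |>.sesq_apply_single_eq_zero (fun a b eK hK => hproduct a b c d eK eL hK hL) a b
  ext ⟨a, c⟩ ⟨b, d⟩
  have := ((B.comp (kroneckerVec ℂ (Pi.single a 1))).compl₂ (kroneckerVec ℂ (Pi.single b 1)))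
    |>.sesq_apply_single_eq_zero (fun c d eL hL => hfirst a b c d eL hL) c d
  simpa [kroneckerVec_single, B] using this

/-- if a real linear functional `θ` on the space of hermitian
2-forms on `ℂⁿ ⊗ ℂᵐ` (represented by its coefficient matrix
`θ (i,j) (k,l) = θ(conj(ε_i ⊗ γ_j) ⊙ (ε_k ⊗ γ_l))`, hermitian in the sense
`θ (i,j) (k,l) = conj (θ (k,l) (i,j))`, pairing with a form by
`⟨θ,ρ⟩ = Σ θ_{ijkl} ρ_{ijkl}`) vanishes on every product form
`conj((ε_a + e_K ε_b) ⊗ (γ_c + e_L γ_d)) ⊙ ((ε_a + e_K ε_b) ⊗ (γ_c + e_L γ_d))`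
with `e_K, e_L ∈ {1, i}`, then `θ = 0`. -/
theorem theta_vanishes (n m : ℕ)
    (θ : (Fin n × Fin m) → (Fin n × Fin m) → ℂ)
    (hherm : ∀ p q, θ p q = conj (θ q p))
    (hvanish : ∀ (a b : Fin n) (c d : Fin m) (eK eL : ℂ),
      (eK = 1 ∨ eK = I) → (eL = 1 ∨ eL = I) →
      (∑ i, ∑ j, ∑ k, ∑ l, θ (i, j) (k, l) *
        conj (((if i = a then 1 else 0) + eK * (if i = b then 1 else 0)) *
              ((if j = c then 1 else 0) + eL * (if j = d then 1 else 0))) *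
        (((if k = a then 1 else 0) + eK * (if k = b then 1 else 0)) *
         ((if l = c then 1 else 0) + eL * (if l = d then 1 else 0)))) = 0) :
    θ = 0 :=
  theta_vanishes_general n m θ hvanish
end

section
/- Let ρ be a nonzero separable hermitian 2-form on H = K ⊗ L, with K, L finite-dimensional complex spaces, and q_ρ(v) = ρ(v,v). Define ker_K ρ = {v ∈ K : q_ρ(v⊗w) = 0 for all w ∈ L} and analogously ker_L ρ. Then the following are equivalent: (1) (IRC): if q_ρ(v₀⊗w₀) = 0 for some v₀ ∈ K, w₀ ∈ L \ {0}, then q_ρ(v₀⊗w) = 0 for all w ∈ L; (2) if q_ρ(v⊗w) = 0 with w ≠ 0, then v ∈ ker_K ρ; (3) for every nonzero class [v] ∈ K/ker_K ρ the quadratic form w ↦ q_ρ(v⊗w) on L is strictly positive definite. -/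
/-!
Each term of `q_ρ(v ⊗ w) = Σ_p conj(φ^p(v) ψ^p(w)) · φ^p(v) ψ^p(w)` is a nonnegative real, so
`q_ρ(v ⊗ w) ≥ 0` in the order of `ℂ`. Strict positivity of `w ↦ q_ρ(v ⊗ w)` therefore only asks
that it not vanish at `w ≠ 0`, which is the contrapositive of (2); and (1) is (2) unfolded.
-/

open Finset
open scoped ComplexConjugate

variable {K L : Type*} [AddCommGroup K] [Module ℂ K] [FiniteDimensional ℂ K]
  [AddCommGroup L] [Module ℂ L] [FiniteDimensional ℂ L]

/-- The quadratic form `q_ρ(v ⊗ w)` of the separable hermitian 2-form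
`ρ = Σ_p conj(φ^p ⊗ ψ^p) ⊙ (φ^p ⊗ ψ^p)` evaluated at a simple tensor:
`q_ρ(v⊗w) = Σ_p |φ^p(v) ψ^p(w)|²`. -/
noncomputable def sepQuad {P : ℕ} (φ : Fin P → (K →ₗ[ℂ] ℂ)) (ψ : Fin P → (L →ₗ[ℂ] ℂ))
    (v : K) (w : L) : ℂ :=
  ∑ p, conj (φ p v * ψ p w) * (φ p v * ψ p w)

/-- `ker_K ρ`: those `v ∈ K` with `q_ρ(v⊗w) = 0` for all `w ∈ L`. -/
def sepKerK {P : ℕ} (φ : Fin P → (K →ₗ[ℂ] ℂ)) (ψ : Fin P → (L →ₗ[ℂ] ℂ)) : Set K :=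
  {v | ∀ w, sepQuad φ ψ v w = 0}

open scoped ComplexOrder

lemma sepQuad_nonneg {K L : Type*} [AddCommGroup K] [Module ℂ K] [AddCommGroup L] [Module ℂ L]
    {P : ℕ} (φ : Fin P → (K →ₗ[ℂ] ℂ)) (ψ : Fin P → (L →ₗ[ℂ] ℂ)) (v : K) (w : L) :
    0 ≤ sepQuad φ ψ v w :=
  Finset.sum_nonneg fun p _ => star_mul_self_nonneg (φ p v * ψ p w)

lemma sepQuad_re_pos_and_im_eq_zero_iff {K L : Type*} [AddCommGroup K] [Module ℂ K]
    [AddCommGroup L] [Module ℂ L] {P : ℕ} (φ : Fin P → (K →ₗ[ℂ] ℂ)) (ψ : Fin P → (L →ₗ[ℂ] ℂ))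
    (v : K) (w : L) :
    0 < (sepQuad φ ψ v w).re ∧ (sepQuad φ ψ v w).im = 0 ↔ sepQuad φ ψ v w ≠ 0 := by
  rw [← (sepQuad_nonneg φ ψ v w).lt_iff_ne', Complex.pos_iff, eq_comm]

theorem sep_IRC_tfae_general {P : ℕ} (φ : Fin P → (K →ₗ[ℂ] ℂ)) (ψ : Fin P → (L →ₗ[ℂ] ℂ)) :
    ((∀ (v₀ : K) (w₀ : L), w₀ ≠ 0 → sepQuad φ ψ v₀ w₀ = 0 →
        ∀ w, sepQuad φ ψ v₀ w = 0) ↔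
      (∀ (v : K) (w : L), w ≠ 0 → sepQuad φ ψ v w = 0 → v ∈ sepKerK φ ψ)) ∧
    ((∀ (v : K) (w : L), w ≠ 0 → sepQuad φ ψ v w = 0 → v ∈ sepKerK φ ψ) ↔
      (∀ v : K, v ∉ sepKerK φ ψ → ∀ w : L, w ≠ 0 →
        0 < (sepQuad φ ψ v w).re ∧ (sepQuad φ ψ v w).im = 0)) := by
  simp only [sepQuad_re_pos_and_im_eq_zero_iff]
  exact ⟨Iff.rfl, forall_congr' fun v =>
    ⟨fun h hv w hw hq => hv (h w hw hq), fun h w hw hq => by_contra fun hv => h hv w hw hq⟩⟩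

/-- for a nonzero separable hermitian 2-form
`ρ = Σ_p conj(φ^p ⊗ ψ^p) ⊙ (φ^p ⊗ ψ^p)` the following are equivalent:
(1) the integral representation condition (IRC);
(2) `q_ρ(v⊗w) = 0` with `w ≠ 0` forces `v ∈ ker_K ρ`;
(3) for every `v ∉ ker_K ρ` (i.e. every nonzero class in `K/ker_K ρ`) the
quadratic form `w ↦ q_ρ(v⊗w)` on `L` is strictly positive definite. -/
theorem sep_IRC_tfae {P : ℕ} (φ : Fin P → (K →ₗ[ℂ] ℂ)) (ψ : Fin P → (L →ₗ[ℂ] ℂ))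
    (hne : ∃ v w, sepQuad φ ψ v w ≠ 0) :
    ((∀ (v₀ : K) (w₀ : L), w₀ ≠ 0 → sepQuad φ ψ v₀ w₀ = 0 →
        ∀ w, sepQuad φ ψ v₀ w = 0) ↔
      (∀ (v : K) (w : L), w ≠ 0 → sepQuad φ ψ v w = 0 → v ∈ sepKerK φ ψ)) ∧
    ((∀ (v : K) (w : L), w ≠ 0 → sepQuad φ ψ v w = 0 → v ∈ sepKerK φ ψ) ↔
      (∀ v : K, v ∉ sepKerK φ ψ → ∀ w : L, w ≠ 0 →
        0 < (sepQuad φ ψ v w).re ∧ (sepQuad φ ψ v w).im = 0)) :=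
  sep_IRC_tfae_general φ ψ
end

section
/- If a nonzero separable hermitian 2-form ρ on K ⊗ L satisfies the integral representation condition (IRC), then ker_L ρ = {0}, and the rank of ρ (as a hermitian form) is at least dim L. In particular, any nonzero hermitian 2-form integrally representable over ℂⁿ on ℂⁿ ⊗ (ℂᵐ)*-dual setting has rank at least n. -/
/-!
Separability makes the Gram matrix of `ρ` positive semidefinite, so `q_ρ(x) = 0` iff `ρ x = 0`.
A nonzero `w ∈ ker_L ρ` would, by IRC, make `q_ρ` vanish on every simple tensor, which span
`K ⊗ L`, so `ρ = 0`. For the rank, pick `v₀` with `q_ρ(v₀ ⊗ w₁) ≠ 0`; IRC then forbids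
`q_ρ(v₀ ⊗ w) = 0` for any `w ≠ 0`, so `w ↦ ρ (v₀ ⊗ w)` is injective on `L`.
-/

open Finset Matrix
open scoped ComplexConjugate ComplexOrder

/-- Separability of a hermitian 2-form on `K ⊗ L = ℂᵐ ⊗ ℂⁿ`-type spaces,
given by its coefficients. -/
def IsSepCoeff {m n : ℕ} (ρ : (Fin m × Fin n) → (Fin m × Fin n) → ℂ) : Prop :=
  ∃ (P : ℕ) (φ : Fin P → Fin m → ℂ) (ψ : Fin P → Fin n → ℂ),
    ∀ i j k l, ρ (i, j) (k, l) = ∑ p, conj (φ p i * ψ p j) * (φ p k * ψ p l)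

/-- The quadratic form `q_ρ(v ⊗ w)` of a hermitian 2-form given by its
coefficients, evaluated on a simple tensor `v ⊗ w`. -/
noncomputable def coeffQuad {m n : ℕ} (ρ : (Fin m × Fin n) → (Fin m × Fin n) → ℂ)
    (v : Fin m → ℂ) (w : Fin n → ℂ) : ℂ :=
  ∑ i, ∑ j, ∑ k, ∑ l, conj (v i * w j) * ρ (i, j) (k, l) * (v k * w l)

/-- The simple tensor `v ⊗ w` in coordinates, as a linear function of `w`. -/
def simpleTensor {α β R : Type*} [CommSemiring R] (v : α → R) : (β → R) →ₗ[R] (α × β → R) where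
  toFun w a := v a.1 * w a.2
  map_add' w w' := by ext a; exact mul_add _ _ _
  map_smul' c w := by ext a; exact mul_left_comm _ _ _

lemma simpleTensor_single_one {α β R : Type*} [CommSemiring R] [DecidableEq α] [DecidableEq β]
    (i : α) (j : β) : simpleTensor (Pi.single i (1 : R)) (Pi.single j 1) = Pi.single (i, j) 1 := by
  ext ⟨k, l⟩
  by_cases hk : k = i <;> by_cases hl : l = j <;> simp [simpleTensor, Pi.single_apply, hk, hl]

lemma Matrix.finrank_le_rank_of_injective {ι ι' K V : Type*} [Fintype ι] [Fintype ι'] [Field K]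
    [AddCommGroup V] [Module K V] {M : Matrix ι ι' K} (T : V →ₗ[K] ι' → K)
    (hT : Function.Injective (M.mulVecLin ∘ₗ T)) : Module.finrank K V ≤ M.rank := by
  rw [← LinearMap.finrank_range_of_inj hT]
  exact Submodule.finrank_mono (LinearMap.range_comp_le_range _ _)

section

variable {m n : ℕ} {ρ : (Fin m × Fin n) → (Fin m × Fin n) → ℂ}

lemma coeffQuad_eq_dotProduct (v : Fin m → ℂ) (w : Fin n → ℂ) :
    coeffQuad ρ v w = star (simpleTensor v w) ⬝ᵥ (of ρ *ᵥ simpleTensor v w) := by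
  simp only [coeffQuad, dotProduct, mulVec, Pi.star_apply, Fintype.sum_prod_type, of_apply,
    mul_sum, RCLike.star_def, simpleTensor, LinearMap.coe_mk, AddHom.coe_mk]
  refine sum_congr rfl fun i _ => sum_congr rfl fun j _ =>
    sum_congr rfl fun k _ => sum_congr rfl fun l _ => by ring

/-- A separable form is the Gram matrix `Aᴴ A` of the vectors `φ p ⊗ ψ p`. -/
lemma IsSepCoeff.posSemidef (hsep : IsSepCoeff ρ) : (of ρ).PosSemidef := by
  obtain ⟨P, φ, ψ, hρ⟩ := hsep
  convert posSemidef_conjTranspose_mul_self (of fun (p : Fin P) (a : Fin m × Fin n) =>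
    φ p a.1 * ψ p a.2)
  ext ⟨i, j⟩ ⟨k, l⟩
  simp [mul_apply, hρ]

lemma coeffQuad_eq_zero_iff (hρ : (of ρ).PosSemidef) (v : Fin m → ℂ) (w : Fin n → ℂ) :
    coeffQuad ρ v w = 0 ↔ of ρ *ᵥ simpleTensor v w = 0 := by
  rw [coeffQuad_eq_dotProduct, hρ.dotProduct_mulVec_zero_iff]

/-- Simple tensors of basis vectors are the standard basis of `K ⊗ L`. -/
lemma eq_zero_of_forall_coeffQuad_eq_zero (hρ : (of ρ).PosSemidef)
    (h : ∀ v w, coeffQuad ρ v w = 0) : ρ = 0 := by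
  ext a ⟨k, l⟩
  have hcol := (coeffQuad_eq_zero_iff hρ _ _).1 (h (Pi.single k 1) (Pi.single l 1))
  rw [simpleTensor_single_one, mulVec_single_one] at hcol
  exact congrFun hcol a

lemma eq_zero_of_forall_coeffQuad_left_eq_zero (hρ : (of ρ).PosSemidef) (hne : ρ ≠ 0)
    (hIRC : ∀ (v₀ : Fin m → ℂ) (w₀ : Fin n → ℂ), w₀ ≠ 0 →
      coeffQuad ρ v₀ w₀ = 0 → ∀ w, coeffQuad ρ v₀ w = 0)
    {w : Fin n → ℂ} (hw : ∀ v, coeffQuad ρ v w = 0) : w = 0 := by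
  by_contra hw0
  exact hne (eq_zero_of_forall_coeffQuad_eq_zero hρ fun v => hIRC v w hw0 (hw v))

lemma le_rank_of_forall_coeffQuad_ne_zero {v₀ : Fin m → ℂ}
    (hv₀ : ∀ w : Fin n → ℂ, w ≠ 0 → coeffQuad ρ v₀ w ≠ 0) : n ≤ (of ρ).rank := by
  have hinj : Function.Injective ((of ρ).mulVecLin ∘ₗ simpleTensor v₀) := by
    rw [← LinearMap.ker_eq_bot, LinearMap.ker_eq_bot']
    intro w hw
    by_contra hw0
    refine hv₀ w hw0 ?_
    rw [coeffQuad_eq_dotProduct]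
    simp only [LinearMap.comp_apply, mulVecLin_apply] at hw
    rw [hw, dotProduct_zero]
  simpa using finrank_le_rank_of_injective _ hinj

end

/-- if a nonzero separable hermitian 2-form `ρ` satisfies the
integral representation condition (IRC), then `ker_L ρ = {0}` and the rank of
`ρ` (as the Gram matrix of the hermitian form) is at least `n = dim L`. -/
theorem IRC_kerL_trivial_and_rank (m n : ℕ)
    (ρ : (Fin m × Fin n) → (Fin m × Fin n) → ℂ)
    (hsep : IsSepCoeff ρ) (hne : ρ ≠ 0)
    (hIRC : ∀ (v₀ : Fin m → ℂ) (w₀ : Fin n → ℂ), w₀ ≠ 0 →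
      coeffQuad ρ v₀ w₀ = 0 → ∀ w, coeffQuad ρ v₀ w = 0) :
    (∀ w : Fin n → ℂ, (∀ v, coeffQuad ρ v w = 0) → w = 0) ∧
    n ≤ (Matrix.of ρ).rank := by
  have hρ := hsep.posSemidef
  have hkerL : ∀ w : Fin n → ℂ, (∀ v, coeffQuad ρ v w = 0) → w = 0 :=
    fun _ => eq_zero_of_forall_coeffQuad_left_eq_zero hρ hne hIRC
  refine ⟨hkerL, ?_⟩
  obtain rfl | hn := Nat.eq_zero_or_pos n
  · exact Nat.zero_le _
  have : NeZero n := ⟨hn.ne'⟩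
  obtain ⟨w₁, hw₁⟩ := exists_ne (0 : Fin n → ℂ)
  obtain ⟨v₀, hv₀⟩ : ∃ v₀, coeffQuad ρ v₀ w₁ ≠ 0 := by
    by_contra! h
    exact hw₁ (hkerL w₁ h)
  exact le_rank_of_forall_coeffQuad_ne_zero fun w hw hq => hv₀ (hIRC v₀ w hw hq w₁)
end
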